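/- Let A, B_1, ..., B_m be self-adjoint d×d matrices and p_1,...,p_m nonnegative weights summing to 1. Suppose that for every non-decreasing convex function f : R → [0,∞) and every unitarily invariant norm ‖·‖ one has ‖f(A)‖ ≤ sum_l p_l ‖f(B_l)‖. Then λ(A) is weakly majorized by sum_l p_l λ(B_l). -/

import Mathlib

open scoped BigOperators ComplexOrder

/-- The eigenvalues of a Hermitian matrix arranged in decreasing order
(counting multiplicities). -/
noncomputable def eigDesc {d : ℕ} {A : Matrix (Fin d) (Fin d) ℂ} (hA : A.IsHermitian) :
    Fin d → ℝ :=
  fun i => (hA.eigenvalues ∘ Tuple.sort hA.eigenvalues) i.rev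

/-- Functional calculus for a Hermitian matrix: apply `f` to the eigenvalues in the
spectral decomposition. -/
noncomputable def herFun {d : ℕ} {A : Matrix (Fin d) (Fin d) ℂ} (hA : A.IsHermitian)
    (f : ℝ → ℝ) : Matrix (Fin d) (Fin d) ℂ :=
  (hA.eigenvectorUnitary : Matrix (Fin d) (Fin d) ℂ) *
    Matrix.diagonal (fun i => (f (hA.eigenvalues i) : ℂ)) *
    star (hA.eigenvectorUnitary : Matrix (Fin d) (Fin d) ℂ)

/-- A unitarily invariant norm on `d × d` complex matrices: a norm `N` with
`N (U X V) = N X` for all unitaries `U, V`. -/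
structure UINorm (d : ℕ) where
  N : Matrix (Fin d) (Fin d) ℂ → ℝ
  add_le : ∀ X Y, N (X + Y) ≤ N X + N Y
  smul_eq : ∀ (c : ℂ) X, N (c • X) = ‖c‖ * N X
  pos_of_ne : ∀ X : Matrix (Fin d) (Fin d) ℂ, X ≠ 0 → (0:ℝ) < N X
  unitary_inv : ∀ U V X, U ∈ Matrix.unitaryGroup (Fin d) ℂ →
    V ∈ Matrix.unitaryGroup (Fin d) ℂ → N (U * X * V) = N X

/-!
Test the hypothesis with the Ky Fan `k`-norm and with `f x = max (x + α) 0`, where `α` is so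
large that `f` acts as the shift `x ↦ x + α` on the spectrum of every `B l`.
For monotone nonnegative `f`, the Ky Fan `k`-norm of `f(H)` is the sum of the `k` largest
values `f (λᵢ(H))`, so the hypothesis reads
`∑_{i<k} f (λᵢ(A)) ≤ ∑ₗ pₗ ∑_{i<k} (λᵢ(Bₗ) + α)`, and `λᵢ(A) + α ≤ f (λᵢ(A))` gives the claim.
The upper bound for the Ky Fan norm of a diagonal matrix `D` is the classical one: with `Pₖ` the
projection onto the first `k` coordinates, the diagonal of `V Pₖ U` in
`tr (Pₖ U D V) = tr (D V Pₖ U)` is dominated entrywise by weights in `[0, 1]` summing to `k`.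
-/

open Matrix

section Weights

variable {ι : Type*} [Fintype ι] [DecidableEq ι]

lemma sum_mul_le_sum_of_threshold (s : Finset ι) {ν w : ι → ℝ} {t : ℝ} (ht : 0 ≤ t)
    (hs : ∀ i ∈ s, t ≤ ν i) (hsc : ∀ i ∉ s, ν i ≤ t)
    (hw₀ : ∀ i, 0 ≤ w i) (hw₁ : ∀ i, w i ≤ 1) (hw : ∑ i, w i ≤ s.card) :
    ∑ i, ν i * w i ≤ ∑ i ∈ s, ν i := by
  have pointwise : ∀ i, ν i * w i ≤
      (if i ∈ s then ν i else 0) + t * (w i - if i ∈ s then 1 else 0) := by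
    intro i
    by_cases hi : i ∈ s
    · simp only [hi, if_true]
      nlinarith [hs i hi, hw₁ i]
    · simp only [hi, if_false]
      nlinarith [hsc i hi, hw₀ i]
  calc ∑ i, ν i * w i
      ≤ ∑ i, ((if i ∈ s then ν i else 0) + t * (w i - if i ∈ s then 1 else 0)) :=
        Finset.sum_le_sum fun i _ => pointwise i
    _ = ∑ i ∈ s, ν i + t * (∑ i, w i - s.card) := by
        rw [Finset.sum_add_distrib, ← Finset.mul_sum, Finset.sum_sub_distrib,
          Finset.sum_ite_mem, Finset.sum_boole]
        simp
    _ ≤ ∑ i ∈ s, ν i := by nlinarith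

end Weights

section Unitary

variable {n : Type*} [Fintype n] [DecidableEq n]

lemma sum_norm_sq_row_of_mem_unitaryGroup {U : Matrix n n ℂ} (hU : U ∈ unitaryGroup n ℂ)
    (i : n) : ∑ j, ‖U i j‖ ^ 2 = 1 := by
  have h := congr_fun₂ (mem_unitaryGroup_iff.mp hU) i i
  simp only [mul_apply, star_apply, RCLike.star_def, one_apply_eq, Complex.mul_conj,
    Complex.normSq_eq_norm_sq] at h
  exact_mod_cast h

lemma sum_norm_sq_col_of_mem_unitaryGroup {U : Matrix n n ℂ} (hU : U ∈ unitaryGroup n ℂ)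
    (j : n) : ∑ i, ‖U i j‖ ^ 2 = 1 := by
  simpa using sum_norm_sq_row_of_mem_unitaryGroup (Unitary.star_mem hU) j

lemma norm_mul_diagonal_mul_apply_le (R Q : Matrix n n ℂ) (s : Finset n) (i : n) :
    ‖(R * diagonal (fun j => if j ∈ s then (1 : ℂ) else 0) * Q) i i‖ ≤
      ∑ j ∈ s, (‖R i j‖ ^ 2 + ‖Q j i‖ ^ 2) / 2 := by
  have entry : (R * diagonal (fun j => if j ∈ s then (1 : ℂ) else 0) * Q) i i =
      ∑ j ∈ s, R i j * Q j i := by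
    simp only [mul_apply (M := _ * _), mul_diagonal, mul_ite, mul_one, mul_zero, ite_mul, zero_mul,
      Finset.sum_ite_mem, Finset.univ_inter]
  rw [entry]
  refine (norm_sum_le _ _).trans (Finset.sum_le_sum fun j _ => ?_)
  rw [norm_mul]
  nlinarith [sq_nonneg (‖R i j‖ - ‖Q j i‖)]

lemma sum_mul_norm_mul_diagonal_mul_apply_le (s : Finset n) {ν : n → ℝ} {t : ℝ}
    (hν₀ : ∀ i, 0 ≤ ν i) (ht : 0 ≤ t) (hs : ∀ i ∈ s, t ≤ ν i) (hsc : ∀ i ∉ s, ν i ≤ t)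
    {R Q : Matrix n n ℂ} (hR : R ∈ unitaryGroup n ℂ) (hQ : Q ∈ unitaryGroup n ℂ) :
    ∑ i, ν i * ‖(R * diagonal (fun j => if j ∈ s then (1 : ℂ) else 0) * Q) i i‖ ≤
      ∑ i ∈ s, ν i := by
  set w : n → ℝ := fun i => ∑ j ∈ s, (‖R i j‖ ^ 2 + ‖Q j i‖ ^ 2) / 2
  have hw₀ : ∀ i, 0 ≤ w i := fun i => Finset.sum_nonneg fun j _ => by positivity
  have hw₁ : ∀ i, w i ≤ 1 := fun i => calc
    w i ≤ ∑ j, (‖R i j‖ ^ 2 + ‖Q j i‖ ^ 2) / 2 :=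
      Finset.sum_le_sum_of_subset_of_nonneg (Finset.subset_univ s) fun j _ _ => by positivity
    _ = 1 := by
      rw [← Finset.sum_div, Finset.sum_add_distrib, sum_norm_sq_row_of_mem_unitaryGroup hR,
        sum_norm_sq_col_of_mem_unitaryGroup hQ]
      norm_num
  have hw : ∑ i, w i = s.card := by
    rw [Finset.sum_comm, Finset.card_eq_sum_ones, Nat.cast_sum]
    refine Finset.sum_congr rfl fun j _ => ?_
    rw [← Finset.sum_div, Finset.sum_add_distrib, sum_norm_sq_col_of_mem_unitaryGroup hR,
      sum_norm_sq_row_of_mem_unitaryGroup hQ]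
    norm_num
  calc ∑ i, ν i * ‖(R * diagonal (fun j => if j ∈ s then (1 : ℂ) else 0) * Q) i i‖
      ≤ ∑ i, ν i * w i := Finset.sum_le_sum fun i _ =>
        mul_le_mul_of_nonneg_left (norm_mul_diagonal_mul_apply_le R Q s i) (hν₀ i)
    _ ≤ ∑ i ∈ s, ν i := sum_mul_le_sum_of_threshold s ht hs hsc hw₀ hw₁ hw.le

lemma permMatrix_mem_unitaryGroup (σ : Equiv.Perm n) : σ.permMatrix ℂ ∈ unitaryGroup n ℂ := by
  rw [mem_unitaryGroup_iff, star_eq_conjTranspose, conjTranspose_permMatrix, ← permMatrix_mul,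
    inv_mul_cancel, permMatrix_one]

lemma isCompact_unitaryGroup : IsCompact (unitaryGroup n ℂ : Set (Matrix n n ℂ)) := by
  have hclosed : IsClosed (unitaryGroup n ℂ : Set (Matrix n n ℂ)) := isClosed_unitary
  open scoped Matrix.Norms.Elementwise in
  exact Metric.isCompact_of_isClosed_isBounded hclosed <|
    isBounded_iff_forall_norm_le.2 ⟨1, fun _ hU => entrywise_sup_norm_bound_of_unitary hU⟩

instance : CompactSpace (unitaryGroup n ℂ) :=
  isCompact_iff_compactSpace.mp isCompact_unitaryGroup

open scoped Matrix.Norms.L2Operator in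
lemma span_unitaryGroup : Submodule.span ℂ (unitaryGroup n ℂ : Set (Matrix n n ℂ)) = ⊤ :=
  CStarAlgebra.span_unitary _

lemma LinearMap.eq_zero_of_forall_unitaryGroup₂
    (β : Matrix n n ℂ →ₗ[ℂ] Matrix n n ℂ →ₗ[ℂ] ℂ)
    (h : ∀ U ∈ unitaryGroup n ℂ, ∀ V ∈ unitaryGroup n ℂ, β U V = 0) : β = 0 :=
  LinearMap.ext_on span_unitaryGroup fun U hU =>
    LinearMap.ext_on span_unitaryGroup fun V hV => h U hU V hV

end Unitary

section KyFan

variable {d : ℕ}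

noncomputable def leadingProj (d k : ℕ) : Matrix (Fin d) (Fin d) ℂ :=
  diagonal fun i => if i ∈ ({i | (i : ℕ) < k} : Finset (Fin d)) then 1 else 0

/-- Variational form of the Ky Fan `k`-norm, the sum of the `k` largest singular values. -/
noncomputable def kyFanNorm (k : ℕ) (X : Matrix (Fin d) (Fin d) ℂ) : ℝ :=
  ⨆ UV : unitaryGroup (Fin d) ℂ × unitaryGroup (Fin d) ℂ,
    ‖(leadingProj d k * ((UV.1 : Matrix (Fin d) (Fin d) ℂ) * X * UV.2)).trace‖

lemma bddAbove_kyFanNorm (k : ℕ) (X : Matrix (Fin d) (Fin d) ℂ) :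
    BddAbove (Set.range fun UV : unitaryGroup (Fin d) ℂ × unitaryGroup (Fin d) ℂ =>
      ‖(leadingProj d k * ((UV.1 : Matrix (Fin d) (Fin d) ℂ) * X * UV.2)).trace‖) :=
  (isCompact_range (by fun_prop)).bddAbove

lemma norm_trace_le_kyFanNorm (k : ℕ) (X : Matrix (Fin d) (Fin d) ℂ)
    {U V : Matrix (Fin d) (Fin d) ℂ} (hU : U ∈ unitaryGroup (Fin d) ℂ)
    (hV : V ∈ unitaryGroup (Fin d) ℂ) :
    ‖(leadingProj d k * (U * X * V)).trace‖ ≤ kyFanNorm k X :=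
  le_ciSup (bddAbove_kyFanNorm k X) (⟨U, hU⟩, ⟨V, hV⟩)

lemma kyFanNorm_le {k : ℕ} {X : Matrix (Fin d) (Fin d) ℂ} {c : ℝ}
    (h : ∀ U ∈ unitaryGroup (Fin d) ℂ, ∀ V ∈ unitaryGroup (Fin d) ℂ,
      ‖(leadingProj d k * (U * X * V)).trace‖ ≤ c) :
    kyFanNorm k X ≤ c :=
  ciSup_le fun UV => h _ UV.1.2 _ UV.2.2

lemma kyFanNorm_add_le (k : ℕ) (X Y : Matrix (Fin d) (Fin d) ℂ) :
    kyFanNorm k (X + Y) ≤ kyFanNorm k X + kyFanNorm k Y :=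
  kyFanNorm_le fun U hU V hV => by
    rw [Matrix.mul_add, Matrix.add_mul, Matrix.mul_add, trace_add]
    exact (norm_add_le _ _).trans
      (add_le_add (norm_trace_le_kyFanNorm k X hU hV) (norm_trace_le_kyFanNorm k Y hU hV))

lemma kyFanNorm_smul (k : ℕ) (c : ℂ) (X : Matrix (Fin d) (Fin d) ℂ) :
    kyFanNorm k (c • X) = ‖c‖ * kyFanNorm k X := by
  rw [kyFanNorm, kyFanNorm, Real.mul_iSup_of_nonneg (norm_nonneg c)]
  simp only [Matrix.mul_smul, Matrix.smul_mul, trace_smul, norm_smul]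

lemma kyFanNorm_unitary_mul_mul (k : ℕ) {U₀ V₀ : Matrix (Fin d) (Fin d) ℂ}
    (hU₀ : U₀ ∈ unitaryGroup (Fin d) ℂ) (hV₀ : V₀ ∈ unitaryGroup (Fin d) ℂ)
    (X : Matrix (Fin d) (Fin d) ℂ) :
    kyFanNorm k (U₀ * X * V₀) = kyFanNorm k X := by
  let e := (Equiv.mulRight (⟨U₀, hU₀⟩ : unitaryGroup (Fin d) ℂ)).prodCongr
    (Equiv.mulLeft (⟨V₀, hV₀⟩ : unitaryGroup (Fin d) ℂ))
  rw [kyFanNorm, kyFanNorm]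
  conv_rhs => rw [← e.iSup_comp]
  simp [e, Matrix.mul_assoc]

lemma kyFanNorm_pos {k : ℕ} (hk : 0 < k) {X : Matrix (Fin d) (Fin d) ℂ} (hX : X ≠ 0) :
    0 < kyFanNorm k X := by
  obtain ⟨a, b, hab⟩ : ∃ a b, X a b ≠ 0 := by
    by_contra! h
    exact hX (Matrix.ext h)
  let i₀ : Fin d := ⟨0, a.pos⟩
  let β : Matrix (Fin d) (Fin d) ℂ →ₗ[ℂ] Matrix (Fin d) (Fin d) ℂ →ₗ[ℂ] ℂ :=
    LinearMap.mk₂ ℂ (fun M N => (leadingProj d k * (M * X * N)).trace)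
      (by intros; simp [Matrix.add_mul, Matrix.mul_add]) (by intros; simp)
      (by intros; simp [Matrix.mul_add]) (by intros; simp)
  have hβ : β (single i₀ a 1) (single b i₀ 1) = X a b := by
    simp [β, leadingProj, single_mul_mul_single, trace_mul_single, i₀, hk]
  -- Unitaries span all matrices, so `β` would vanish, yet it recovers `X a b` at matrix units.
  by_contra! hle
  have hβ₀ : β = 0 := LinearMap.eq_zero_of_forall_unitaryGroup₂ β fun U hU V hV =>
    norm_eq_zero.mp (le_antisymm ((norm_trace_le_kyFanNorm k X hU hV).trans hle) (norm_nonneg _))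
  exact hab (by simpa [hβ₀] using hβ.symm)

noncomputable def kyFanUINorm {k : ℕ} (hk : 0 < k) : UINorm d where
  N := kyFanNorm k
  add_le := kyFanNorm_add_le k
  smul_eq := kyFanNorm_smul k
  pos_of_ne _ hX := kyFanNorm_pos hk hX
  unitary_inv _ _ X hU hV := kyFanNorm_unitary_mul_mul k hU hV X

lemma kyFanNorm_diagonal {k : ℕ} (hk : 0 < k) (hkd : k ≤ d) {ν : Fin d → ℝ}
    (hν : Antitone ν) (hν₀ : ∀ i, 0 ≤ ν i) :
    kyFanNorm k (diagonal fun i => (ν i : ℂ)) =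
      ∑ i ∈ ({i | (i : ℕ) < k} : Finset (Fin d)), ν i := by
  apply le_antisymm
  · refine kyFanNorm_le fun U hU V hV => ?_
    have trace_eq : (leadingProj d k * (U * diagonal (fun i => (ν i : ℂ)) * V)).trace =
        ∑ i, (V * leadingProj d k * U) i i * ν i := by
      rw [← Matrix.mul_assoc, ← Matrix.mul_assoc, trace_mul_cycle, ← Matrix.mul_assoc]
      simp [trace, mul_diagonal]
    let last : Fin d := ⟨k - 1, by omega⟩
    have hlast : ∀ i, i ∈ ({i | (i : ℕ) < k} : Finset (Fin d)) ↔ i ≤ last := fun i => by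
      simp only [Finset.mem_filter, Finset.mem_univ, true_and, Fin.le_def, last]
      omega
    calc ‖(leadingProj d k * (U * diagonal (fun i => (ν i : ℂ)) * V)).trace‖
        ≤ ∑ i, ν i * ‖(V * leadingProj d k * U) i i‖ := by
          rw [trace_eq]
          refine (norm_sum_le _ _).trans (le_of_eq (Finset.sum_congr rfl fun i _ => ?_))
          rw [norm_mul, Complex.norm_real, Real.norm_of_nonneg (hν₀ i), mul_comm]
      _ ≤ _ := sum_mul_norm_mul_diagonal_mul_apply_le _ hν₀ (hν₀ last)
          (fun i hi => hν ((hlast i).1 hi)) (fun i hi => hν (not_le.mp (mt (hlast i).2 hi)).le)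
          hV hU
  · have h := norm_trace_le_kyFanNorm k (diagonal fun i => (ν i : ℂ)) (one_mem _) (one_mem _)
    simp only [Matrix.mul_one, leadingProj, diagonal_mul_diagonal, trace_diagonal,
      ite_mul, one_mul, zero_mul, Finset.sum_ite_mem, Finset.univ_inter, ← Complex.ofReal_sum,
      Complex.norm_real, Real.norm_of_nonneg (Finset.sum_nonneg fun i _ => hν₀ i)] at h
    exact h

lemma eigDesc_antitone {A : Matrix (Fin d) (Fin d) ℂ} (hA : A.IsHermitian) :
    Antitone (eigDesc hA) :=
  fun _ _ hij => Tuple.monotone_sort hA.eigenvalues (Fin.rev_le_rev.mpr hij)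

lemma exists_herFun_eq_conj_diagonal_eigDesc {A : Matrix (Fin d) (Fin d) ℂ} (hA : A.IsHermitian)
    (f : ℝ → ℝ) : ∃ U ∈ unitaryGroup (Fin d) ℂ,
      herFun hA f = U * diagonal (fun i => (f (eigDesc hA i) : ℂ)) * star U := by
  let ρ : Equiv.Perm (Fin d) := Fin.revPerm.trans (Tuple.sort hA.eigenvalues)
  let W : Matrix (Fin d) (Fin d) ℂ := hA.eigenvectorUnitary
  refine ⟨W * ρ⁻¹.permMatrix ℂ,
    mul_mem hA.eigenvectorUnitary.2 (permMatrix_mem_unitaryGroup _), ?_⟩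
  let D : Matrix (Fin d) (Fin d) ℂ := diagonal fun j => (f (hA.eigenvalues j) : ℂ)
  have hsorted : (diagonal fun i => (f (eigDesc hA i) : ℂ)) = D.submatrix ρ ρ := by
    rw [submatrix_diagonal_equiv]
    rfl
  have hunsort : ρ⁻¹.permMatrix ℂ * D.submatrix ρ ρ * ρ.permMatrix ℂ = D := by
    rw [PEquiv.toMatrix_toPEquiv_mul, PEquiv.mul_toMatrix_toPEquiv, submatrix_submatrix,
      submatrix_submatrix]
    simp
  calc herFun hA f = W * D * star W := rfl
    _ = W * (ρ⁻¹.permMatrix ℂ * D.submatrix ρ ρ * ρ.permMatrix ℂ) * star W := by rw [hunsort]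
    _ = _ := by
      rw [star_mul, star_eq_conjTranspose (ρ⁻¹.permMatrix ℂ), conjTranspose_permMatrix, inv_inv,
        hsorted]
      simp only [Matrix.mul_assoc]

lemma kyFanNorm_herFun {k : ℕ} (hk : 0 < k) (hkd : k ≤ d) {A : Matrix (Fin d) (Fin d) ℂ}
    (hA : A.IsHermitian) {f : ℝ → ℝ} (hf : Monotone f) (hf₀ : ∀ x, 0 ≤ f x) :
    kyFanNorm k (herFun hA f) = ∑ i ∈ ({i | (i : ℕ) < k} : Finset (Fin d)), f (eigDesc hA i) := by
  obtain ⟨U, hU, hfA⟩ := exists_herFun_eq_conj_diagonal_eigDesc hA f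
  rw [hfA, kyFanNorm_unitary_mul_mul k hU (Unitary.star_mem hU)]
  exact kyFanNorm_diagonal hk hkd (hf.comp_antitone (eigDesc_antitone hA)) fun _ => hf₀ _

end KyFan

lemma convexOn_max_add_const_zero (α : ℝ) : ConvexOn ℝ Set.univ fun x : ℝ => max (x + α) 0 :=
  ((convexOn_id convex_univ).add_const α).sup (convexOn_const 0 convex_univ)

theorem norm_ineq_implies_weak_majorization_average_general
    {d m : ℕ} {A : Matrix (Fin d) (Fin d) ℂ} (hA : A.IsHermitian)
    {B : Fin m → Matrix (Fin d) (Fin d) ℂ} (hB : ∀ l, (B l).IsHermitian)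
    (p : Fin m → ℝ) (hp_sum : ∑ l, p l = 1)
    (hnorm : ∀ f : ℝ → ℝ, Monotone f → ConvexOn ℝ Set.univ f → (∀ x, 0 ≤ f x) →
      ∀ Φ : UINorm d, Φ.N (herFun hA f) ≤ ∑ l, p l * Φ.N (herFun (hB l) f)) :
    ∀ k, k ≤ d →
      ∑ i ∈ Finset.univ.filter (fun i : Fin d => (i : ℕ) < k), eigDesc hA i ≤
      ∑ i ∈ Finset.univ.filter (fun i : Fin d => (i : ℕ) < k), ∑ l, p l * eigDesc (hB l) i := by
  intro k hkd
  rcases k.eq_zero_or_pos with rfl | hk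
  · simp
  set I := Finset.univ.filter (fun i : Fin d => (i : ℕ) < k)
  set α := ∑ l, ∑ i, |eigDesc (hB l) i|
  set f : ℝ → ℝ := fun x => max (x + α) 0
  have hf : Monotone f := fun x y hxy => max_le_max (by linarith) le_rfl
  have hf₀ : ∀ x, 0 ≤ f x := fun x => le_max_right _ _
  have hfB : ∀ l i, f (eigDesc (hB l) i) = eigDesc (hB l) i + α := fun l i => by
    have : |eigDesc (hB l) i| ≤ α :=
      (Finset.single_le_sum (fun i _ => abs_nonneg _) (Finset.mem_univ i)).trans
        (Finset.single_le_sum (f := fun l => ∑ i, |eigDesc (hB l) i|)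
          (fun l _ => Finset.sum_nonneg fun i _ => abs_nonneg _) (Finset.mem_univ l))
    exact max_eq_left (by linarith [neg_abs_le (eigDesc (hB l) i)])
  have key := hnorm f hf (convexOn_max_add_const_zero α) hf₀ (kyFanUINorm hk)
  simp only [kyFanUINorm, kyFanNorm_herFun hk hkd _ hf hf₀, hfB] at key
  have hA_shift : ∑ i ∈ I, eigDesc hA i + I.card * α ≤ ∑ i ∈ I, f (eigDesc hA i) := by
    rw [← nsmul_eq_mul, ← Finset.sum_const, ← Finset.sum_add_distrib]
    exact Finset.sum_le_sum fun i _ => le_max_left _ _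
  have hB_shift : ∑ l, p l * ∑ i ∈ I, (eigDesc (hB l) i + α) =
      ∑ i ∈ I, ∑ l, p l * eigDesc (hB l) i + I.card * α := by
    simp only [Finset.sum_add_distrib, Finset.sum_const, nsmul_eq_mul, mul_add, Finset.mul_sum,
      ← Finset.sum_mul, hp_sum, one_mul]
    rw [Finset.sum_comm]
  linarith

/-- **Theorem 3.1, (b) ⇒ (a), discrete case.** If, for self-adjoint `A, B l` and weights
`p l ≥ 0` summing to `1`, the inequality `N (f(A)) ≤ ∑ l, p l * N (f(B l))` holds for
every non-decreasing convex `f : ℝ → [0,∞)` and every unitarily invariant norm `N`,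
then `λ(A) ≺_w ∑ l, p l • λ(B l)`. -/
theorem norm_ineq_implies_weak_majorization_average
    {d m : ℕ} {A : Matrix (Fin d) (Fin d) ℂ} (hA : A.IsHermitian)
    {B : Fin m → Matrix (Fin d) (Fin d) ℂ} (hB : ∀ l, (B l).IsHermitian)
    (p : Fin m → ℝ) (hp : ∀ l, 0 ≤ p l) (hp_sum : ∑ l, p l = 1)
    (hnorm : ∀ f : ℝ → ℝ, Monotone f → ConvexOn ℝ Set.univ f → (∀ x, 0 ≤ f x) →
      ∀ Φ : UINorm d, Φ.N (herFun hA f) ≤ ∑ l, p l * Φ.N (herFun (hB l) f)) :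
    ∀ k, k ≤ d →
      ∑ i ∈ Finset.univ.filter (fun i : Fin d => (i : ℕ) < k), eigDesc hA i ≤
      ∑ i ∈ Finset.univ.filter (fun i : Fin d => (i : ℕ) < k), ∑ l, p l * eigDesc (hB l) i :=
  norm_ineq_implies_weak_majorization_average_general hA hB p hp_sum hnorm
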